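/- Let a : ℕ → ℝ and define the reward ρ_t for t ≥ 1 by ρ_t = 0 if a_t ≤ max_{s<t} a_s and ρ_t = −a_t² + (max_{s<t} a_s)² otherwise, and let P_t = ∑_{s=1}^{t} ρ_s be the cumulative reward. Assume a_t ≥ 0 for all t. Then P_t = a_0² − (max_{0 ≤ s ≤ t} a_s)² for every t ≥ 1, the sequence (P_t) is nonincreasing, and for every horizon T ≥ 1, P attains its minimum over {1,…,T} exactly at those times t for which max_{0 ≤ s ≤ t} a_s = max_{0 ≤ s ≤ T} a_s; in particular the first minimizer of the cumulative reward coincides with the first time the running maximum of a attains its global maximum over {0,…,T} (when that time is ≥ 1). -/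

import Mathlib

/-!
Writing `M t = max_{s ≤ t} a s`, we have `M (t + 1) = max (a (t + 1)) (M t)`, so in both cases of
its definition `ρ (t + 1) = M t ^ 2 - M (t + 1) ^ 2` and the cumulative reward telescopes to
`P t = a 0 ^ 2 - M t ^ 2`. Since `M` is monotone and nonnegative, `P` is antitone, so `t ≤ T`
minimizes `P` on `[1, T]` iff `P t = P T`, i.e. iff `M t = M T`. When the first time `M` reaches
`M T` is at least `1`, the set of minimizers and the set of such times coincide.
-/

open Finset

theorem Finset.sum_Icc_one_eq_sub {M : Type*} [AddCommGroup M] {f g : ℕ → M}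
    (h : ∀ t, f (t + 1) = g t - g (t + 1)) (t : ℕ) : ∑ s ∈ Icc 1 t, f s = g 0 - g t := by
  rw [← Ico_add_one_right_eq_Icc, sum_Ico_eq_sum_range, Nat.add_sub_cancel]
  simp only [add_comm 1, h, sum_range_sub']

theorem Antitone.forall_le_iff_eq {α : Type*} [PartialOrder α] {f : ℕ → α} (hf : Antitone f)
    {m t T : ℕ} (hmT : m ≤ T) (htT : t ≤ T) :
    (∀ s, m ≤ s → s ≤ T → f t ≤ f s) ↔ f t = f T :=
  ⟨fun h => le_antisymm (h T hmT le_rfl) (hf htT),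
    fun h _ _ hsT => h ▸ hf hsT⟩

def runningMax {α : Type*} [SemilatticeSup α] (a : ℕ → α) (t : ℕ) : α :=
  (range (t + 1)).sup' nonempty_range_add_one a

section runningMax

variable {α : Type*} [SemilatticeSup α] (a : ℕ → α)

@[simp]
theorem runningMax_zero : runningMax a 0 = a 0 := by
  simp [runningMax]

theorem runningMax_succ (t : ℕ) : runningMax a (t + 1) = a (t + 1) ⊔ runningMax a t := by
  simp only [runningMax, range_add_one (n := t + 1)]
  exact sup'_insert _ _

theorem le_runningMax {s t : ℕ} (hst : s ≤ t) : a s ≤ runningMax a t :=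
  le_sup' a (mem_range.2 (by omega))

theorem monotone_runningMax : Monotone (runningMax a) := fun _ _ hst =>
  sup'_mono a (range_subset_range.2 (by omega)) _

end runningMax

theorem reward_eq_sq_runningMax_sub {a ρ : ℕ → ℝ}
    (hρ : ∀ t : ℕ, ρ (t + 1) =
      if a (t + 1) ≤ runningMax a t then 0 else -(a (t + 1)) ^ 2 + (runningMax a t) ^ 2)
    (t : ℕ) : ρ (t + 1) = runningMax a t ^ 2 - runningMax a (t + 1) ^ 2 := by
  rw [hρ, runningMax_succ]
  split_ifs with h
  · rw [sup_eq_right.2 h, sub_self]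
  · rw [sup_eq_left.2 (not_le.1 h).le]
    ring

theorem antitone_const_sub_sq_runningMax {a : ℕ → ℝ} (ha : 0 ≤ a 0) (c : ℝ) :
    Antitone fun t => c - runningMax a t ^ 2 := fun s _ hst =>
  sub_le_sub_left (pow_le_pow_left₀ (ha.trans (le_runningMax a s.zero_le))
    (monotone_runningMax a hst) 2) c

/-- For a nonnegative trajectory `a` and the reward `ρ` built from its
running maximum, the cumulative reward `P_t = ∑_{s=1}^t ρ_s` satisfies
`P_t = a_0² − (max_{0 ≤ s ≤ t} a_s)²` for `t ≥ 1`, is nonincreasing, and for every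
horizon `T ≥ 1` its minimizers over `{1,…,T}` are exactly the times at which the running
maximum of `a` attains its value over `{0,…,T}`; in particular the first minimizer of `P`
coincides with the first time the running maximum attains its global maximum over
`{0,…,T}` (when that time is `≥ 1`). -/
theorem reward_cumulative_min_at_peak (a : ℕ → ℝ) (ha : ∀ t, 0 ≤ a t) (ρ P : ℕ → ℝ)
    (hρ : ∀ t : ℕ, ρ (t + 1) =
      if a (t + 1) ≤ (Finset.range (t + 1)).sup' Finset.nonempty_range_add_one a then 0
      else -(a (t + 1)) ^ 2 + ((Finset.range (t + 1)).sup' Finset.nonempty_range_add_one a) ^ 2)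
    (hP : ∀ t : ℕ, P t = ∑ s ∈ Finset.Icc 1 t, ρ s) :
    (∀ t : ℕ, 1 ≤ t →
      P t = (a 0) ^ 2 - ((Finset.range (t + 1)).sup' Finset.nonempty_range_add_one a) ^ 2) ∧
    Antitone P ∧
    (∀ T : ℕ, 1 ≤ T → ∀ t : ℕ, 1 ≤ t → t ≤ T →
      ((∀ s : ℕ, 1 ≤ s → s ≤ T → P t ≤ P s) ↔
        (Finset.range (t + 1)).sup' Finset.nonempty_range_add_one a
          = (Finset.range (T + 1)).sup' Finset.nonempty_range_add_one a)) ∧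
    (∀ T : ℕ, 1 ≤ T →
      1 ≤ sInf {t : ℕ | t ≤ T ∧
          (Finset.range (t + 1)).sup' Finset.nonempty_range_add_one a
            = (Finset.range (T + 1)).sup' Finset.nonempty_range_add_one a} →
      sInf {t : ℕ | 1 ≤ t ∧ t ≤ T ∧ ∀ s : ℕ, 1 ≤ s → s ≤ T → P t ≤ P s}
        = sInf {t : ℕ | t ≤ T ∧
            (Finset.range (t + 1)).sup' Finset.nonempty_range_add_one a
              = (Finset.range (T + 1)).sup' Finset.nonempty_range_add_one a}) := by
  change ∀ t, ρ (t + 1) = if a (t + 1) ≤ runningMax a t then 0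
    else -(a (t + 1)) ^ 2 + runningMax a t ^ 2 at hρ
  have hPM : P = fun t => a 0 ^ 2 - runningMax a t ^ 2 := funext fun t => by
    rw [hP, sum_Icc_one_eq_sub (reward_eq_sq_runningMax_sub hρ), runningMax_zero]
  have hP_anti : Antitone P := hPM ▸ antitone_const_sub_sq_runningMax (ha 0) _
  have hM_nonneg : ∀ t, 0 ≤ runningMax a t := fun t => (ha 0).trans (le_runningMax a t.zero_le)
  have hmin_iff : ∀ T, 1 ≤ T → ∀ t, 1 ≤ t → t ≤ T →
      ((∀ s, 1 ≤ s → s ≤ T → P t ≤ P s) ↔ runningMax a t = runningMax a T) := by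
    intro T hT t _ htT
    rw [hP_anti.forall_le_iff_eq hT htT, hPM, sub_right_inj,
      sq_eq_sq₀ (hM_nonneg t) (hM_nonneg T)]
  refine ⟨fun t _ => congrFun hPM t, hP_anti, hmin_iff, fun T hT hpeak => congrArg sInf ?_⟩
  ext t
  refine ⟨fun ⟨ht, htT, hmin⟩ => ⟨htT, (hmin_iff T hT t ht htT).1 hmin⟩,
    fun ⟨htT, hpeak_t⟩ => ?_⟩
  have ht : 1 ≤ t := hpeak.trans (Nat.sInf_le ⟨htT, hpeak_t⟩)
  exact ⟨ht, htT, (hmin_iff T hT t ht htT).2 hpeak_t⟩
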